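/- Let N be a free ℤ-module of finite rank n ≥ 2 with a symmetric bilinear form (−,−) whose ℝ-linear extension to N ⊗ ℝ is nondegenerate of signature (2, n−2), extended ℂ-bilinearly to N ⊗ ℂ, and let Δ = { δ ∈ N : (δ,δ) = −2 }. Suppose Ω ∈ N ⊗ ℂ is a vector whose real and imaginary parts span a positive definite two-plane in N ⊗ ℝ and which satisfies (Ω,δ) ≠ 0 for all δ ∈ Δ. Then for every constant m > 0 the set { v ∈ N : (v,v) ≥ −2 and |(Ω,v)| ≤ m } is finite. -/

import Mathlib

/-!
STATEMENT 11 (Lemma 6.3 of the paper): if `Ω` spans a positive definite two-plane and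
is orthogonal to no root, then for every `m > 0` there are only finitely many lattice
vectors `v` with `(v,v) ≥ -2` and `|(Ω,v)| ≤ m`.

The free ℤ-module `N` of rank `n` is realised as `Fin n → ℤ`, with `N ⊗ ℝ = Fin n → ℝ`
and `N ⊗ ℂ = Fin n → ℂ`; the symmetric bilinear form is given by an integer matrix `M`,
extended ℝ- and ℂ-bilinearly.
-/

open scoped BigOperators

noncomputable section

/-- The ℝ-bilinear extension of the form given by the integer matrix `M`. -/
def bR {n : ℕ} (M : Matrix (Fin n) (Fin n) ℤ) (u v : Fin n → ℝ) : ℝ :=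
  ∑ i, ∑ j, (M i j : ℝ) * u i * v j

/-- The ℂ-bilinear extension of the form given by the integer matrix `M`. -/
def bC {n : ℕ} (M : Matrix (Fin n) (Fin n) ℤ) (u v : Fin n → ℂ) : ℂ :=
  ∑ i, ∑ j, (M i j : ℂ) * u i * v j

/-- The inclusion `N ⊗ ℝ → N ⊗ ℂ`. -/
def toC {n : ℕ} (v : Fin n → ℝ) : Fin n → ℂ := fun i => (v i : ℂ)

/-- The real part of a vector in `N ⊗ ℂ`, as a vector in `N ⊗ ℝ`. -/
def reOf {n : ℕ} (u : Fin n → ℂ) : Fin n → ℝ := fun i => (u i).re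

/-- The imaginary part of a vector in `N ⊗ ℂ`, as a vector in `N ⊗ ℝ`. -/
def imOf {n : ℕ} (u : Fin n → ℂ) : Fin n → ℝ := fun i => (u i).im


/-- The integral form given by the integer matrix `M` on `N = Fin n → ℤ`. -/
def bZ {n : ℕ} (M : Matrix (Fin n) (Fin n) ℤ) (u v : Fin n → ℤ) : ℤ :=
  ∑ i, ∑ j, M i j * u i * v j

/-- The inclusion `N → N ⊗ ℂ`. -/
def intToC {n : ℕ} (v : Fin n → ℤ) : Fin n → ℂ := fun i => (v i : ℂ)

/-!
The form is negative definite on the orthogonal complement of the positive plane `P` spanned by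
`Re Ω` and `Im Ω`: a vector `w ⊥ P` with `(w, w) ≥ 0` would span with `P` a three-dimensional
space on which the form is positive semidefinite, and such a space meets the negative definite
subspace of dimension `n - 2`. So `(v, v) ≥ -2` together with bounded pairings of `v` against `P`
confines `v` to a bounded region (by compactness of the unit sphere), which contains only
finitely many lattice points.
-/

open Module

namespace LinearMap.BilinForm

section Signature

variable {V U : Type*} [AddCommGroup V] [Module ℝ V] [AddCommGroup U] [Module ℝ U]

theorem apply_self_neg_of_orthogonal_posDef_plane [FiniteDimensional ℝ U]
    {B : LinearMap.BilinForm ℝ V} (hB : B.IsSymm) (p : V →ₗ[ℝ] U) (hU : finrank ℝ U ≤ 2)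
    (hker : ∀ x ∈ LinearMap.ker p, x ≠ 0 → B x x < 0) {r s w : V}
    (hP : ∀ a b : ℝ, ¬(a = 0 ∧ b = 0) → 0 < B (a • r + b • s) (a • r + b • s))
    (hr : B r w = 0) (hs : B s w = 0) (hw : w ≠ 0) : B w w < 0 := by
  by_contra! hww
  have hdep : ¬LinearIndependent ℝ ![p r, p s, p w] := fun h => by
    have := h.fintype_card_le_finrank
    simp only [Fintype.card_fin] at this
    omega
  obtain ⟨g, hg, i, hi⟩ := Fintype.not_linearIndependent_iff.mp hdep
  set y := g 0 • r + g 1 • s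
  set x := y + g 2 • w
  have hx : x ∈ LinearMap.ker p := by
    simpa [x, y, Fin.sum_univ_three, add_assoc] using hg
  have hyw : B y w = 0 := by simp [y, hr, hs]
  have hxx : B x x = B y y + g 2 ^ 2 * B w w := by
    simp only [x, map_add, map_smul, LinearMap.add_apply, LinearMap.smul_apply, smul_eq_mul, hyw,
      hB.eq w y]
    ring
  by_cases hy : g 0 = 0 ∧ g 1 = 0
  · have h2 : g 2 ≠ 0 := by fin_cases i <;> simp_all
    have hy0 : y = 0 := by simp [y, hy.1, hy.2]
    have hx0 : x ≠ 0 := by simpa [x, hy0, h2] using hw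
    have hxx_neg := hker x hx hx0
    rw [hxx, hy0, map_zero, zero_add] at hxx_neg
    exact hxx_neg.not_ge (mul_nonneg (sq_nonneg _) hww)
  · have hxx_nonpos : B x x ≤ 0 := by
      by_cases hx0 : x = 0
      · simp [hx0]
      · exact (hker x hx hx0).le
    nlinarith [hP _ _ hy, sq_nonneg (g 2)]

theorem apply_self_eq_sum_mul_sq {ι : Type*} [Fintype ι] [DecidableEq ι]
    {B : LinearMap.BilinForm ℝ V} (e : Basis ι ℝ V) (σ : ι → ℝ)
    (he : ∀ i j, B (e i) (e j) = if i = j then σ i else 0) (x : V) :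
    B x x = ∑ i, σ i * e.repr x i ^ 2 := by
  conv_lhs => rw [← e.sum_repr x]
  simp only [map_sum, map_smul, LinearMap.sum_apply, LinearMap.smul_apply, he, smul_eq_mul,
    mul_ite, mul_zero, Finset.sum_ite_eq', Finset.mem_univ, if_true]
  exact Finset.sum_congr rfl fun i _ => by ring

theorem apply_self_neg_of_orthogonal_of_signature_two {n : ℕ} {B : LinearMap.BilinForm ℝ V}
    (hB : B.IsSymm) (e : Basis (Fin n) ℝ V)
    (he : ∀ i j, B (e i) (e j) = if i = j then (if (i : ℕ) < 2 then 1 else -1) else 0)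
    {r s w : V} (hP : ∀ a b : ℝ, ¬(a = 0 ∧ b = 0) → 0 < B (a • r + b • s) (a • r + b • s))
    (hr : B r w = 0) (hs : B s w = 0) (hw : w ≠ 0) : B w w < 0 := by
  let p : V →ₗ[ℝ] ({i : Fin n // (i : ℕ) < 2} → ℝ) := LinearMap.pi fun i => e.coord i
  refine apply_self_neg_of_orthogonal_posDef_plane hB p ?_ ?_ hP hr hs hw
  · rw [finrank_fintype_fun_eq_card]
    exact Fintype.card_le_of_injective (fun i => (⟨i.1, i.2⟩ : Fin 2))
      fun a b h => by simpa [Fin.ext_iff, Subtype.ext_iff] using h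
  intro x hx hx0
  have hcoord : ∀ i : Fin n, (i : ℕ) < 2 → e.repr x i = 0 := fun i hi =>
    congrFun (LinearMap.mem_ker.mp hx) ⟨i, hi⟩
  obtain ⟨j, hj⟩ : ∃ j, e.repr x j ≠ 0 := by
    by_contra! h
    exact hx0 (e.repr.map_eq_zero_iff.mp (Finsupp.ext h))
  rw [apply_self_eq_sum_mul_sq e _ he]
  refine Finset.sum_neg' (fun i _ => ?_) ⟨j, Finset.mem_univ j, ?_⟩
  · split_ifs with hi
    · simp [hcoord i hi]
    · nlinarith [sq_nonneg (e.repr x i)]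
  · have hj2 : ¬(j : ℕ) < 2 := fun h => hj (hcoord j h)
    simp only [hj2, if_false, neg_one_mul, neg_neg_iff_pos]
    positivity

end Signature

section Bounded

variable {V : Type*} [NormedAddCommGroup V] [NormedSpace ℝ V] [FiniteDimensional ℝ V]

/-- The unit sphere is compact and `max (|f u|, |g u|, -B u u)` is positive on it; a vector `v`
of the set with `‖v‖ ≥ 1` makes this function at most `max m |C| / ‖v‖` at `v / ‖v‖`. -/
theorem isBounded_setOf_abs_le_of_negDef_on_ker (B : LinearMap.BilinForm ℝ V)
    (f g : V →ₗ[ℝ] ℝ) (hneg : ∀ w, w ≠ 0 → f w = 0 → g w = 0 → B w w < 0) (m C : ℝ) :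
    Bornology.IsBounded {v | |f v| ≤ m ∧ |g v| ≤ m ∧ -C ≤ B v v} := by
  set φ : V → ℝ := fun u => max (max |f u| |g u|) (-B u u)
  have hφ : Continuous φ := by
    have hB : Continuous fun u => B.toContinuousBilinearMap u u := by fun_prop
    simp only [LinearMap.toContinuousBilinearMap_apply] at hB
    exact (f.continuous_of_finiteDimensional.abs.max g.continuous_of_finiteDimensional.abs).max
      hB.neg
  have hφpos : ∀ u ∈ Metric.sphere (0 : V) 1, 0 < φ u := by
    intro u hu
    have hu0 : u ≠ 0 := ne_zero_of_mem_unit_sphere ⟨u, hu⟩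
    by_cases hfg : f u = 0 ∧ g u = 0
    · exact lt_max_of_lt_right (neg_pos.mpr (hneg u hu0 hfg.1 hfg.2))
    · refine lt_max_of_lt_left ?_
      rcases not_and_or.mp hfg with h | h
      · exact lt_max_of_lt_left (abs_pos.mpr h)
      · exact lt_max_of_lt_right (abs_pos.mpr h)
  obtain ⟨c, hc, hcφ⟩ := (isCompact_sphere (0 : V) 1).exists_forall_le' hφ.continuousOn hφpos
  set K := max m |C|
  refine isBounded_iff_forall_norm_le.mpr ⟨max 1 (K / c), ?_⟩
  rintro v ⟨hfv, hgv, hBv⟩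
  rcases le_or_gt ‖v‖ 1 with hv1 | hv1
  · exact le_max_of_le_left hv1
  refine le_max_of_le_right ((le_div_iff₀ hc).mpr ?_)
  set t := ‖v‖
  have ht : 0 < t := by linarith
  have hu : t⁻¹ • v ∈ Metric.sphere (0 : V) 1 := by
    rw [mem_sphere_zero_iff_norm, norm_smul, norm_inv, norm_norm, inv_mul_cancel₀ ht.ne']
  have hφu : φ (t⁻¹ • v) ≤ t⁻¹ * K := by
    simp only [φ, map_smul, LinearMap.smul_apply, smul_eq_mul, abs_mul, abs_inv, abs_of_pos ht]
    refine max_le (max_le ?_ ?_) ?_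
    · exact mul_le_mul_of_nonneg_left (hfv.trans (le_max_left _ _)) (by positivity)
    · exact mul_le_mul_of_nonneg_left (hgv.trans (le_max_left _ _)) (by positivity)
    · have hBK : t⁻¹ * -B v v ≤ |C| := calc
        t⁻¹ * -B v v ≤ t⁻¹ * |C| := by gcongr; linarith [le_abs_self C]
        _ ≤ 1 * |C| := by gcongr; exact inv_le_one_of_one_le₀ hv1.le
        _ = |C| := one_mul _
      rw [← mul_neg, ← mul_neg]
      exact mul_le_mul_of_nonneg_left (hBK.trans (le_max_right _ _)) (by positivity)
  have := (hcφ _ hu).trans hφu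
  rw [le_inv_mul_iff₀ ht] at this
  linarith

end Bounded

end LinearMap.BilinForm

theorem finite_setOf_intCast_mem_of_isBounded {ι : Type*} [Fintype ι] {S : Set (ι → ℝ)}
    (hS : Bornology.IsBounded S) : {v : ι → ℤ | (fun i => (v i : ℝ)) ∈ S}.Finite := by
  obtain ⟨R, hR⟩ := isBounded_iff_forall_norm_le.mp hS
  refine (isCompact_closedBall (0 : ι → ℤ) R).finite_of_discrete.subset fun v hv => ?_
  have hvR : ‖fun i => (v i : ℝ)‖ ≤ R := hR _ hv
  rw [mem_closedBall_zero_iff]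
  refine (pi_norm_le_iff_of_nonneg ((norm_nonneg _).trans hvR)).mpr fun i => ?_
  rw [← Int.norm_cast_real]
  exact (norm_le_pi_norm (fun i => (v i : ℝ)) i).trans hvR

section IntegralForm

variable {n : ℕ} (M : Matrix (Fin n) (Fin n) ℤ)

def formR : LinearMap.BilinForm ℝ (Fin n → ℝ) := Matrix.toBilin' (M.map (Int.cast : ℤ → ℝ))

theorem formR_apply (u v : Fin n → ℝ) : formR M u v = bR M u v := by
  simp only [formR, Matrix.toBilin'_apply, Matrix.map_apply, bR]
  exact Finset.sum_congr rfl fun i _ => Finset.sum_congr rfl fun j _ => by ring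

variable {M}

theorem formR_isSymm (hsymm : ∀ i j, M i j = M j i) : (formR M).IsSymm :=
  ⟨fun u v => by
    simp only [formR_apply, bR]
    rw [Finset.sum_comm]
    exact Finset.sum_congr rfl fun i _ => Finset.sum_congr rfl fun j _ => by
      rw [hsymm j i]; ring⟩

theorem re_bC_intToC (Ω : Fin n → ℂ) (v : Fin n → ℤ) :
    (bC M Ω (intToC v)).re = bR M (reOf Ω) (fun i => (v i : ℝ)) := by
  simp [bC, bR, reOf, intToC, Complex.re_sum, Complex.mul_re]

theorem im_bC_intToC (Ω : Fin n → ℂ) (v : Fin n → ℤ) :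
    (bC M Ω (intToC v)).im = bR M (imOf Ω) (fun i => (v i : ℝ)) := by
  simp [bC, bR, imOf, intToC, Complex.im_sum, Complex.mul_im]

theorem cast_bZ (v : Fin n → ℤ) :
    ((bZ M v v : ℤ) : ℝ) = bR M (fun i => (v i : ℝ)) (fun i => (v i : ℝ)) := by
  simp [bZ, bR]

end IntegralForm

theorem finitely_many_bounded_vectors {n : ℕ}
    (M : Matrix (Fin n) (Fin n) ℤ) (hsymm : ∀ i j, M i j = M j i)
    -- the real extension of the form is nondegenerate of signature (2, n-2):
    (e : Module.Basis (Fin n) ℝ (Fin n → ℝ))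
    (he : ∀ i j, bR M (e i) (e j) =
      if i = j then (if (i : ℕ) < 2 then 1 else -1) else 0)
    -- `Ω` spans a positive definite two-plane in `N ⊗ ℝ`:
    (Ω : Fin n → ℂ)
    (hΩ : ∀ a b : ℝ, ¬ (a = 0 ∧ b = 0) →
      0 < bR M (a • reOf Ω + b • imOf Ω) (a • reOf Ω + b • imOf Ω))
    (m : ℝ) :
    {v : Fin n → ℤ | -2 ≤ bZ M v v ∧ ‖bC M Ω (intToC v)‖ ≤ m}.Finite := by
  simp only [← formR_apply] at he hΩ
  have hneg : ∀ w, w ≠ 0 → formR M (reOf Ω) w = 0 → formR M (imOf Ω) w = 0 →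
      formR M w w < 0 := fun w hw hr hs =>
    LinearMap.BilinForm.apply_self_neg_of_orthogonal_of_signature_two (formR_isSymm hsymm) e
      he hΩ hr hs hw
  refine (finite_setOf_intCast_mem_of_isBounded
    (LinearMap.BilinForm.isBounded_setOf_abs_le_of_negDef_on_ker (formR M)
      (formR M (reOf Ω)) (formR M (imOf Ω)) hneg m 2)).subset ?_
  rintro v ⟨hvv, hΩv⟩
  refine ⟨?_, ?_, ?_⟩
  · rw [formR_apply, ← re_bC_intToC]
    exact (Complex.abs_re_le_norm _).trans hΩv
  · rw [formR_apply, ← im_bC_intToC]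
    exact (Complex.abs_im_le_norm _).trans hΩv
  · rw [formR_apply, ← cast_bZ]
    exact_mod_cast hvv

end
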